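/- arXiv:2106.09404 — 3 statements merged into one kernel-verified Lean document; each statement's English description precedes it below -/
import Mathlib

section
/- Let R = K[[t^7, t^8, t^{11}, t^{17}, t^{20}]] over a field K, the semigroup ring of H = ⟨7, 8, 11, 17, 20⟩. Then R is far-flung Gorenstein, i.e., tr_R(ω_R) = R : R̄ = t^{14}·K[[t]], but R does not have minimal multiplicity: e(R) = 7 > v(R) = 5. -/
set_option synthInstance.maxHeartbeats 400000

open PowerSeries

/-- The numerical semigroup ring `K[[H]] = K[[tʰ : h ∈ H]] ⊆ K[[t]]`: the subalgebra of
power series supported on `H`. -/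
noncomputable def sgRing (K : Type*) [Field K] (H : AddSubmonoid ℕ) :
    Subalgebra K (PowerSeries K) where
  carrier := {f | ∀ n : ℕ, n ∉ H → PowerSeries.coeff n f = 0}
  mul_mem' := by
    intro f g hf hg n hn
    rw [PowerSeries.coeff_mul]
    apply Finset.sum_eq_zero
    rintro ⟨i, j⟩ hij
    replace hij : i + j = n := by simpa using hij
    by_cases hi : i ∈ H
    · have hj : j ∉ H := fun hj => hn (hij ▸ H.add_mem hi hj)
      simp [hg j hj]
    · simp [hf i hi]
  add_mem' := by
    intro f g hf hg n hn
    simp [hf n hn, hg n hn]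
  one_mem' := by
    intro n hn
    have h0 : n ≠ 0 := fun h => hn (h ▸ H.zero_mem)
    simp [PowerSeries.coeff_one, h0]
  algebraMap_mem' := by
    intro k n hn
    have h0 : n ≠ 0 := fun h => hn (h ▸ H.zero_mem)
    simp [PowerSeries.algebraMap_apply, PowerSeries.coeff_C, h0]

/-- The set of pseudo-Frobenius numbers
`PF(H) = {x ∈ ℤ \ H : x + h ∈ H for all 0 ≠ h ∈ H}`. -/
def pseudoFrobenius (H : AddSubmonoid ℕ) : Set ℤ :=
  {x : ℤ | x ∉ (Nat.cast '' (H : Set ℕ) : Set ℤ) ∧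
    ∀ h ∈ (Nat.cast '' (H : Set ℕ) : Set ℤ), h ≠ 0 →
      x + h ∈ (Nat.cast '' (H : Set ℕ) : Set ℤ)}

/-- The Frobenius number `F(H) = max (ℤ \ H)`. -/
noncomputable def frobeniusNumber (H : AddSubmonoid ℕ) : ℤ :=
  sSup {x : ℤ | x ∉ (Nat.cast '' (H : Set ℕ) : Set ℤ)}

/-- The fractional canonical ideal `C = Σ_{α ∈ PF(H)} K[[H]]·t^{F(H)-α}` of `K[[H]]`. -/
noncomputable def canonicalIdeal (K : Type*) [Field K] (H : AddSubmonoid ℕ) :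
    Submodule ↥(sgRing K H) (PowerSeries K) :=
  Submodule.span ↥(sgRing K H)
    ((fun α : ℤ => (PowerSeries.X : PowerSeries K) ^ (frobeniusNumber H - α).toNat) ''
      pseudoFrobenius H)

/-- `K[[H]]` is far-flung Gorenstein: `tr(ω) = R : R̄`, equivalently `C² = K[[t]]`
(the whole of `K[[t]]`, i.e. `⊤` as a `K[[H]]`-submodule of `K[[t]]`). -/
def IsFarFlungGorenstein (K : Type*) [Field K] (H : AddSubmonoid ℕ) : Prop :=
  canonicalIdeal K H * canonicalIdeal K H = ⊤

section Aux

variable {K : Type*} [Field K]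

private lemma memH_aux : ∀ n : ℕ, 14 ≤ n → n ∈ AddSubmonoid.closure ({7, 8, 11, 17, 20} : Set ℕ) := by
  intro n
  induction n using Nat.strong_induction_on with
  | _ n ih =>
    intro hn
    have h7 : (7:ℕ) ∈ AddSubmonoid.closure ({7, 8, 11, 17, 20} : Set ℕ) :=
      AddSubmonoid.subset_closure (by simp)
    have h8 : (8:ℕ) ∈ AddSubmonoid.closure ({7, 8, 11, 17, 20} : Set ℕ) :=
      AddSubmonoid.subset_closure (by simp)
    have h11 : (11:ℕ) ∈ AddSubmonoid.closure ({7, 8, 11, 17, 20} : Set ℕ) :=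
      AddSubmonoid.subset_closure (by simp)
    have h17 : (17:ℕ) ∈ AddSubmonoid.closure ({7, 8, 11, 17, 20} : Set ℕ) :=
      AddSubmonoid.subset_closure (by simp)
    have h20 : (20:ℕ) ∈ AddSubmonoid.closure ({7, 8, 11, 17, 20} : Set ℕ) :=
      AddSubmonoid.subset_closure (by simp)
    by_cases h : n ≤ 20
    · interval_cases n
      · exact (show (14:ℕ) = 7 + 7 by norm_num) ▸ AddSubmonoid.add_mem _ h7 h7
      · exact (show (15:ℕ) = 7 + 8 by norm_num) ▸ AddSubmonoid.add_mem _ h7 h8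
      · exact (show (16:ℕ) = 8 + 8 by norm_num) ▸ AddSubmonoid.add_mem _ h8 h8
      · exact h17
      · exact (show (18:ℕ) = 7 + 11 by norm_num) ▸ AddSubmonoid.add_mem _ h7 h11
      · exact (show (19:ℕ) = 8 + 11 by norm_num) ▸ AddSubmonoid.add_mem _ h8 h11
      · exact h20
    · have h1 : n - 7 ∈ AddSubmonoid.closure ({7, 8, 11, 17, 20} : Set ℕ) :=
        ih (n - 7) (by omega) (by omega)
      have : n = (n - 7) + 7 := by omega
      exact this ▸ AddSubmonoid.add_mem _ h1 h7

private lemma memH (n : ℕ) :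
    n ∈ AddSubmonoid.closure ({7, 8, 11, 17, 20} : Set ℕ) ↔
      (n = 0 ∨ n = 7 ∨ n = 8 ∨ n = 11 ∨ 14 ≤ n) := by
  constructor
  · intro hn
    induction hn using AddSubmonoid.closure_induction with
    | mem x hx => simp only [Set.mem_insert_iff, Set.mem_singleton_iff] at hx; omega
    | zero => omega
    | add x y hx hy ihx ihy => omega
  · intro hn
    rcases hn with rfl | rfl | rfl | rfl | h
    · exact AddSubmonoid.zero_mem _
    · exact AddSubmonoid.subset_closure (by simp)
    · exact AddSubmonoid.subset_closure (by simp)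
    · exact AddSubmonoid.subset_closure (by simp)
    · exact memH_aux n h

private lemma memCastH (x : ℤ) :
    x ∈ (Nat.cast '' ((AddSubmonoid.closure ({7, 8, 11, 17, 20} : Set ℕ) : AddSubmonoid ℕ) : Set ℕ) : Set ℤ) ↔
      (x = 0 ∨ x = 7 ∨ x = 8 ∨ x = 11 ∨ 14 ≤ x) := by
  constructor
  · rintro ⟨m, hm, rfl⟩
    have := (memH m).mp hm
    omega
  · intro hx
    refine ⟨x.toNat, (memH _).mpr (by omega), by omega⟩

private lemma frob_eq :
    frobeniusNumber (AddSubmonoid.closure ({7, 8, 11, 17, 20} : Set ℕ)) = 13 := by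
  apply IsGreatest.csSup_eq
  constructor
  · rw [Set.mem_setOf_eq, memCastH]; omega
  · intro x hx
    rw [Set.mem_setOf_eq, memCastH] at hx
    omega

private lemma pf_eq :
    pseudoFrobenius (AddSubmonoid.closure ({7, 8, 11, 17, 20} : Set ℕ)) =
      ({9, 10, 12, 13} : Set ℤ) := by
  ext x
  simp only [pseudoFrobenius, Set.mem_setOf_eq, Set.mem_insert_iff, Set.mem_singleton_iff]
  constructor
  · rintro ⟨hx, hall⟩
    rw [memCastH] at hx
    have h7 := hall 7 ((memCastH 7).mpr (by omega)) (by omega)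
    have h8 := hall 8 ((memCastH 8).mpr (by omega)) (by omega)
    rw [memCastH] at h7 h8
    omega
  · rintro hx
    constructor
    · rw [memCastH]; omega
    · intro h hh hne
      rw [memCastH] at hh
      rw [memCastH]
      omega

private lemma canonical_eq (K : Type*) [Field K] :
    canonicalIdeal K (AddSubmonoid.closure ({7, 8, 11, 17, 20} : Set ℕ)) =
      Submodule.span ↥(sgRing K (AddSubmonoid.closure ({7, 8, 11, 17, 20} : Set ℕ)))
        ({(X : PowerSeries K) ^ 4, X ^ 3, X ^ 1, X ^ 0} : Set (PowerSeries K)) := by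
  rw [canonicalIdeal, pf_eq, frob_eq]
  congr 1
  rw [show ({9, 10, 12, 13} : Set ℤ) = insert 9 (insert 10 (insert 12 {13})) from rfl]
  rw [Set.image_insert_eq, Set.image_insert_eq, Set.image_insert_eq, Set.image_singleton]
  norm_num
  rfl

end Aux
section Aux2

variable {K : Type*} [Field K]

private lemma mem_one_iff (f : PowerSeries K) :
    f ∈ (1 : Submodule ↥(sgRing K (AddSubmonoid.closure ({7, 8, 11, 17, 20} : Set ℕ)))
        (PowerSeries K)) ↔
      ∀ n : ℕ, n ∉ AddSubmonoid.closure ({7, 8, 11, 17, 20} : Set ℕ) →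
        PowerSeries.coeff n f = 0 := by
  rw [Submodule.mem_one]
  constructor
  · rintro ⟨⟨g, hg⟩, rfl⟩; exact hg
  · intro hf; exact ⟨⟨f, hf⟩, rfl⟩

private lemma dvd_mem_one {f : PowerSeries K} (h : (X : PowerSeries K) ^ 14 ∣ f) :
    f ∈ (1 : Submodule ↥(sgRing K (AddSubmonoid.closure ({7, 8, 11, 17, 20} : Set ℕ)))
        (PowerSeries K)) := by
  rw [mem_one_iff]
  intro n hn
  rw [memH] at hn
  exact PowerSeries.X_pow_dvd_iff.mp h n (by omega)

private lemma mem_M14 (f : PowerSeries K) :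
    f ∈ LinearMap.range (LinearMap.mulLeft
        ↥(sgRing K (AddSubmonoid.closure ({7, 8, 11, 17, 20} : Set ℕ)))
        ((PowerSeries.X : PowerSeries K) ^ 14)) ↔ (X : PowerSeries K) ^ 14 ∣ f := by
  constructor
  · rintro ⟨g, rfl⟩; exact ⟨g, rfl⟩
  · rintro ⟨g, rfl⟩; exact ⟨g, rfl⟩

private lemma one_div_top (K : Type*) [Field K] :
    (1 : Submodule ↥(sgRing K (AddSubmonoid.closure ({7, 8, 11, 17, 20} : Set ℕ)))
        (PowerSeries K)) / ⊤ =
      LinearMap.range (LinearMap.mulLeft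
        ↥(sgRing K (AddSubmonoid.closure ({7, 8, 11, 17, 20} : Set ℕ)))
        ((PowerSeries.X : PowerSeries K) ^ 14)) := by
  ext f
  rw [Submodule.mem_div_iff_forall_mul_mem, mem_M14]
  constructor
  · intro hf
    rw [PowerSeries.X_pow_dvd_iff]
    intro n hn
    have h13 := hf ((X : PowerSeries K) ^ (13 - n)) trivial
    rw [mem_one_iff] at h13
    have h := h13 (n + (13 - n)) (by rw [memH]; omega)
    rwa [PowerSeries.coeff_mul_X_pow] at h
  · intro hd g _
    exact dvd_mem_one (hd.mul_right g)

private lemma one_div_C (K : Type*) [Field K] :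
    (1 : Submodule ↥(sgRing K (AddSubmonoid.closure ({7, 8, 11, 17, 20} : Set ℕ)))
        (PowerSeries K)) / canonicalIdeal K (AddSubmonoid.closure ({7, 8, 11, 17, 20} : Set ℕ)) =
      LinearMap.range (LinearMap.mulLeft
        ↥(sgRing K (AddSubmonoid.closure ({7, 8, 11, 17, 20} : Set ℕ)))
        ((PowerSeries.X : PowerSeries K) ^ 14)) := by
  have h0 : (X : PowerSeries K) ^ 0 ∈
      canonicalIdeal K (AddSubmonoid.closure ({7, 8, 11, 17, 20} : Set ℕ)) := by
    rw [canonical_eq]; exact Submodule.subset_span (by simp)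
  have h1 : (X : PowerSeries K) ^ 1 ∈
      canonicalIdeal K (AddSubmonoid.closure ({7, 8, 11, 17, 20} : Set ℕ)) := by
    rw [canonical_eq]; exact Submodule.subset_span (by simp)
  have h3 : (X : PowerSeries K) ^ 3 ∈
      canonicalIdeal K (AddSubmonoid.closure ({7, 8, 11, 17, 20} : Set ℕ)) := by
    rw [canonical_eq]; exact Submodule.subset_span (by simp)
  ext f
  rw [Submodule.mem_div_iff_forall_mul_mem, mem_M14]
  constructor
  · intro hf
    rw [PowerSeries.X_pow_dvd_iff]
    intro n hn
    have key : ∀ a : ℕ, (X : PowerSeries K) ^ a ∈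
        canonicalIdeal K (AddSubmonoid.closure ({7, 8, 11, 17, 20} : Set ℕ)) →
        (n + a) ∉ AddSubmonoid.closure ({7, 8, 11, 17, 20} : Set ℕ) →
        PowerSeries.coeff n f = 0 := by
      intro a ha hna
      have h := hf _ ha
      rw [mem_one_iff] at h
      have h2 := h (n + a) hna
      rwa [PowerSeries.coeff_mul_X_pow] at h2
    interval_cases n
    · exact key 1 h1 (by rw [memH]; omega)
    · exact key 0 h0 (by rw [memH]; omega)
    · exact key 0 h0 (by rw [memH]; omega)
    · exact key 0 h0 (by rw [memH]; omega)
    · exact key 0 h0 (by rw [memH]; omega)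
    · exact key 0 h0 (by rw [memH]; omega)
    · exact key 0 h0 (by rw [memH]; omega)
    · exact key 3 h3 (by rw [memH]; omega)
    · exact key 1 h1 (by rw [memH]; omega)
    · exact key 0 h0 (by rw [memH]; omega)
    · exact key 0 h0 (by rw [memH]; omega)
    · exact key 1 h1 (by rw [memH]; omega)
    · exact key 0 h0 (by rw [memH]; omega)
    · exact key 0 h0 (by rw [memH]; omega)
  · intro hd c _
    exact dvd_mem_one (hd.mul_right c)

private lemma conj1 (K : Type*) [Field K] :
    ((1 : Submodule ↥(sgRing K (AddSubmonoid.closure ({7, 8, 11, 17, 20} : Set ℕ)))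
        (PowerSeries K)) /
        canonicalIdeal K (AddSubmonoid.closure ({7, 8, 11, 17, 20} : Set ℕ))) *
        canonicalIdeal K (AddSubmonoid.closure ({7, 8, 11, 17, 20} : Set ℕ)) =
      (1 : Submodule ↥(sgRing K (AddSubmonoid.closure ({7, 8, 11, 17, 20} : Set ℕ)))
        (PowerSeries K)) / ⊤ := by
  rw [one_div_C, one_div_top]
  apply le_antisymm
  · rw [Submodule.mul_le]
    intro m hm c _
    rw [mem_M14] at hm ⊢
    exact hm.mul_right c
  · intro f hf
    have h0 : (X : PowerSeries K) ^ 0 ∈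
        canonicalIdeal K (AddSubmonoid.closure ({7, 8, 11, 17, 20} : Set ℕ)) := by
      rw [canonical_eq]; exact Submodule.subset_span (by simp)
    have := Submodule.mul_mem_mul hf h0
    simpa using this

private lemma conj3 :
    IsLeast {n : ℕ | n ∈ AddSubmonoid.closure ({7, 8, 11, 17, 20} : Set ℕ) ∧ n ≠ 0} 7 := by
  constructor
  · exact ⟨(memH 7).mpr (by omega), by omega⟩
  · intro n hn
    have := (memH n).mp hn.1
    have h2 := hn.2
    omega

private lemma conj4 :
    ∃ S : Finset ℕ, S.card = 5 ∧
      AddSubmonoid.closure (S : Set ℕ) = AddSubmonoid.closure ({7, 8, 11, 17, 20} : Set ℕ) := by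
  refine ⟨{7, 8, 11, 17, 20}, by decide, ?_⟩
  congr 1
  simp

private lemma conj5 (S : Finset ℕ)
    (hS : AddSubmonoid.closure (S : Set ℕ) = AddSubmonoid.closure ({7, 8, 11, 17, 20} : Set ℕ)) :
    5 ≤ S.card := by
  have key : ∀ x ∈ AddSubmonoid.closure (S : Set ℕ), x = 0 ∨ x ∈ S ∨
      ∃ a b : ℕ, a ∈ AddSubmonoid.closure ({7, 8, 11, 17, 20} : Set ℕ) ∧
        b ∈ AddSubmonoid.closure ({7, 8, 11, 17, 20} : Set ℕ) ∧ a ≠ 0 ∧ b ≠ 0 ∧ x = a + b := by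
    intro x hx
    induction hx using AddSubmonoid.closure_induction with
    | mem y hy => exact Or.inr (Or.inl hy)
    | zero => exact Or.inl rfl
    | add a b ha hb iha ihb =>
      by_cases ha0 : a = 0
      · simpa [ha0] using ihb
      · by_cases hb0 : b = 0
        · simpa [hb0] using iha
        · exact Or.inr (Or.inr ⟨a, b, hS ▸ ha, hS ▸ hb, ha0, hb0, rfl⟩)
  have hsub : ({7, 8, 11, 17, 20} : Finset ℕ) ⊆ S := by
    intro g hg
    simp only [Finset.mem_insert, Finset.mem_singleton] at hg
    have hgH : g ∈ AddSubmonoid.closure ({7, 8, 11, 17, 20} : Set ℕ) :=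
      (memH g).mpr (by omega)
    have hgS : g ∈ AddSubmonoid.closure (S : Set ℕ) := by rw [hS]; exact hgH
    rcases key g hgS with h0 | h | ⟨a, b, ha, hb, ha0, hb0, hab⟩
    · omega
    · exact h
    · exfalso
      have hA := (memH a).mp ha
      have hB := (memH b).mp hb
      omega
  calc 5 = ({7, 8, 11, 17, 20} : Finset ℕ).card := by decide
    _ ≤ S.card := Finset.card_le_card hsub

end Aux2
/-- Let `R = K[[t⁷, t⁸, t¹¹, t¹⁷, t²⁰]]`, the semigroup ring of
`H = ⟨7, 8, 11, 17, 20⟩`. Then `R` is far-flung Gorenstein, i.e.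
`tr_R(ω_R) = R : R̄ = t¹⁴·K[[t]]`, but `R` does not have minimal multiplicity:
`e(R) = 7` (the least nonzero element of `H`) while the embedding dimension, the
minimal number of generators of `H`, is `5`. -/
theorem farFlungGorenstein_example_7_8_11_17_20 (K : Type*) [Field K] :
    let H : AddSubmonoid ℕ := AddSubmonoid.closure {7, 8, 11, 17, 20}
    -- `tr_R(ω_R) = R : R̄`
    ((1 : Submodule ↥(sgRing K H) (PowerSeries K)) / canonicalIdeal K H) *
        canonicalIdeal K H =
      (1 : Submodule ↥(sgRing K H) (PowerSeries K)) / ⊤ ∧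
    -- `R : R̄ = t¹⁴·K[[t]]`
    (1 : Submodule ↥(sgRing K H) (PowerSeries K)) / ⊤ =
      LinearMap.range (LinearMap.mulLeft ↥(sgRing K H)
        ((PowerSeries.X : PowerSeries K) ^ 14)) ∧
    -- `e(R) = 7`
    IsLeast {n : ℕ | n ∈ H ∧ n ≠ 0} 7 ∧
    -- `v(R) = 5`: `H` is minimally generated by five elements
    (∃ S : Finset ℕ, S.card = 5 ∧ AddSubmonoid.closure (S : Set ℕ) = H) ∧
    (∀ S : Finset ℕ, AddSubmonoid.closure (S : Set ℕ) = H → 5 ≤ S.card) := by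
  intro H
  exact ⟨conj1 K, one_div_top K, conj3, conj4, conj5⟩
end

section
/- Let H be a numerical semigroup with multiplicity e(H), Frobenius number F(H), and pseudo-Frobenius set PF(H), and let R = K[[H]] over a field K. Then R is far-flung Gorenstein if and only if {0, 1, ..., e(H)-1} ⊆ {2F(H) - α - β : α, β ∈ PF(H)}, if and only if {2F(H) - e(H) + 1, ..., 2F(H)} ⊆ {α + β : α, β ∈ PF(H)}. -/
set_option synthInstance.maxHeartbeats 400000

open PowerSeries
open scoped Pointwise

private lemma coeff_eq_zero_of_mem_span {K : Type*} [Field K] {H : AddSubmonoid ℕ}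
    {S : Set ℕ} (hS : ∀ s ∈ S, ∀ h ∈ H, s + h ∈ S)
    {M : Set (PowerSeries K)} (hM : ∀ g ∈ M, ∀ n : ℕ, n ∉ S → coeff n g = 0)
    {f : PowerSeries K} (hf : f ∈ Submodule.span ↥(sgRing K H) M) :
    ∀ n : ℕ, n ∉ S → coeff n f = 0 := by
  induction hf using Submodule.span_induction with
  | mem g hg => exact hM g hg
  | zero => simp
  | add f g _ _ hf hg => intro n hn; simp [hf n hn, hg n hn]
  | smul r f _ hf =>
      intro n hn
      have hrf : (r • f) = (r : PowerSeries K) * f := rfl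
      rw [hrf, coeff_mul]
      apply Finset.sum_eq_zero
      rintro ⟨i, j⟩ hij
      replace hij : i + j = n := by simpa using hij
      by_cases hi : i ∈ H
      · by_cases hjS : j ∈ S
        · exact absurd (hij ▸ (add_comm j i ▸ hS j hjS i hi)) hn
        · simp [hf j hjS]
      · simp [r.2 i hi]

private lemma mem_span_monomials {K : Type*} [Field K] {H : AddSubmonoid ℕ}
    (D : Finset ℕ)
    (c : ℕ → ℕ) (hcD : ∀ n, c n ∈ D) (hcle : ∀ n, c n ≤ n) (hch : ∀ n, n - c n ∈ H)
    (f : PowerSeries K) :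
    f ∈ Submodule.span ↥(sgRing K H) ((fun d => (X : PowerSeries K) ^ d) '' (D : Set ℕ)) := by
  classical
  set r : ℕ → PowerSeries K :=
    fun d => PowerSeries.mk fun m => if c (d + m) = d then coeff (d + m) f else 0 with hr
  have hrmem : ∀ d, r d ∈ sgRing K H := by
    intro d m hm
    simp only [hr, coeff_mk]
    rw [if_neg]
    intro hc
    refine hm ?_
    have := hch (d + m)
    rwa [hc, Nat.add_sub_cancel_left] at this
  have key : f = ∑ d ∈ D, r d * X ^ d := by
    ext n
    rw [map_sum]
    have hterm : ∀ d ∈ D, coeff n (r d * X ^ d) =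
        if d = c n then coeff n f else 0 := by
      intro d _
      rw [PowerSeries.coeff_mul_X_pow']
      by_cases hdn : d ≤ n
      · rw [if_pos hdn]
        simp only [hr, coeff_mk, Nat.add_sub_cancel' hdn]
        by_cases hcn : c n = d
        · rw [if_pos hcn, if_pos hcn.symm]
        · rw [if_neg hcn, if_neg (fun h => hcn h.symm)]
      · rw [if_neg hdn, if_neg]
        intro h
        exact hdn (h ▸ hcle n)
    rw [Finset.sum_congr rfl hterm, Finset.sum_ite_eq' D (c n) (fun _ => coeff n f),
      if_pos (hcD n)]
  rw [key]
  refine Submodule.sum_mem _ fun d hd => ?_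
  have hsm : r d * X ^ d = (⟨r d, hrmem d⟩ : sgRing K H) • (X ^ d : PowerSeries K) := rfl
  rw [hsm]
  exact Submodule.smul_mem _ _ (Submodule.subset_span ⟨d, hd, rfl⟩)

/-- Let `H` be a numerical semigroup with multiplicity `e(H)`,
Frobenius number `F(H)` and pseudo-Frobenius set `PF(H)`, and `R = K[[H]]`. Then `R` is
far-flung Gorenstein iff `{0, 1, …, e(H)-1} ⊆ {2F(H) - α - β : α, β ∈ PF(H)}`, iff
`{2F(H) - e(H) + 1, …, 2F(H)} ⊆ {α + β : α, β ∈ PF(H)}`. -/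
theorem farFlungGorenstein_iff_sumset (K : Type*) [Field K] (H : AddSubmonoid ℕ)
    (hfin : ((H : Set ℕ)ᶜ).Finite)
    (e : ℕ) (he : IsLeast {n : ℕ | n ∈ H ∧ n ≠ 0} e) :
    (IsFarFlungGorenstein K H ↔
      ∀ n : ℤ, 0 ≤ n → n < (e : ℤ) →
        ∃ α ∈ pseudoFrobenius H, ∃ β ∈ pseudoFrobenius H,
          n = 2 * frobeniusNumber H - α - β) ∧
    (IsFarFlungGorenstein K H ↔
      ∀ z : ℤ, 2 * frobeniusNumber H - (e : ℤ) + 1 ≤ z → z ≤ 2 * frobeniusNumber H →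
        ∃ α ∈ pseudoFrobenius H, ∃ β ∈ pseudoFrobenius H, z = α + β) := by
  classical
  obtain ⟨⟨heH, hene⟩, hemin⟩ := he
  set F : ℤ := frobeniusNumber H with hFdef
  -- basic facts about the Frobenius number
  have hUbdd : BddAbove {x : ℤ | x ∉ (Nat.cast '' (H : Set ℕ) : Set ℤ)} := by
    refine ⟨((hfin.toFinset.sup id : ℕ) : ℤ), ?_⟩
    intro x hx
    rcases le_or_gt 0 x with h0 | h0
    · have hxH : x.toNat ∉ H := by
        intro hmem
        exact hx ⟨x.toNat, hmem, by omega⟩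
      have hxF : x.toNat ∈ hfin.toFinset := by
        rw [Set.Finite.mem_toFinset]; exact hxH
      have := Finset.le_sup (f := id) hxF
      simp only [id] at this
      omega
    · have : (0:ℤ) ≤ ((hfin.toFinset.sup id : ℕ) : ℤ) := by positivity
      omega
  have hUne : {x : ℤ | x ∉ (Nat.cast '' (H : Set ℕ) : Set ℤ)}.Nonempty :=
    ⟨-1, by rintro ⟨n, _, hn⟩; omega⟩
  have hFmem : F ∉ (Nat.cast '' (H : Set ℕ) : Set ℤ) := Int.csSup_mem hUne hUbdd
  have hFub : ∀ x : ℤ, x ∉ (Nat.cast '' (H : Set ℕ) : Set ℤ) → x ≤ F :=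
    fun x hx => le_csSup hUbdd hx
  have hgtF : ∀ z : ℤ, F < z → z ∈ (Nat.cast '' (H : Set ℕ) : Set ℤ) := by
    intro z hz
    by_contra hzi
    exact absurd (hFub z hzi) (by omega)
  -- basic facts about pseudo-Frobenius numbers
  have hPFle : ∀ α ∈ pseudoFrobenius H, α ≤ F := fun α hα => hFub α hα.1
  have heimg : ((e : ℕ) : ℤ) ∈ (Nat.cast '' (H : Set ℕ) : Set ℤ) := ⟨e, heH, rfl⟩
  have hPFge : ∀ α ∈ pseudoFrobenius H, -(e : ℤ) ≤ α := by
    intro α hα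
    obtain ⟨n, _, hn⟩ := hα.2 (e : ℤ) heimg (by exact_mod_cast hene)
    omega
  have hFPF : F ∈ pseudoFrobenius H := by
    refine ⟨hFmem, fun h hh hne => ?_⟩
    obtain ⟨n, hnH, rfl⟩ := hh
    have hn0 : n ≠ 0 := by exact_mod_cast hne
    exact hgtF _ (by omega)
  have htn : ∀ α ∈ pseudoFrobenius H, ((F - α).toNat : ℤ) = F - α := by
    intro α hα; have := hPFle α hα; omega
  -- the support set
  set S : Set ℕ := {n | ∃ α ∈ pseudoFrobenius H, ∃ β ∈ pseudoFrobenius H, ∃ h ∈ H,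
      n = (F - α).toNat + (F - β).toNat + h} with hSdef
  have hSclosed : ∀ s ∈ S, ∀ h ∈ H, s + h ∈ S := by
    rintro s ⟨α, hα, β, hβ, h, hh, rfl⟩ h' hh'
    exact ⟨α, hα, β, hβ, h + h', H.add_mem hh hh', by omega⟩
  -- the combinatorial equivalence
  have hSA : (∀ n : ℕ, n ∈ S) ↔
      (∀ n : ℤ, 0 ≤ n → n < (e : ℤ) →
        ∃ α ∈ pseudoFrobenius H, ∃ β ∈ pseudoFrobenius H, n = 2 * F - α - β) := by
    constructor
    · intro hS' n hn0 hne
      obtain ⟨α, hα, β, hβ, h, hh, heq⟩ := hS' n.toNat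
      have hca := htn α hα
      have hcb := htn β hβ
      have heqZ : (n.toNat : ℤ) = ((F - α).toNat : ℤ) + ((F - β).toNat : ℤ) + (h : ℤ) := by
        exact_mod_cast congrArg (Nat.cast : ℕ → ℤ) heq
      have hh0 : h = 0 := by
        by_contra hne0
        have := hemin ⟨hh, hne0⟩
        omega
      exact ⟨α, hα, β, hβ, by omega⟩
    · intro hA n
      obtain ⟨m, h, hmlt, hhH, rfl⟩ : ∃ m h, m < e ∧ h ∈ H ∧ n = m + h := by
        refine ⟨n % e, e * (n / e), Nat.mod_lt _ (Nat.pos_of_ne_zero hene), ?_,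
          (Nat.mod_add_div n e).symm⟩
        have := AddSubmonoid.nsmul_mem H heH (n / e)
        rwa [smul_eq_mul, mul_comm] at this
      obtain ⟨α, hα, β, hβ, hm⟩ := hA (m : ℤ) (by omega) (by exact_mod_cast hmlt)
      refine ⟨α, hα, β, hβ, h, hhH, ?_⟩
      have hca := htn α hα
      have hcb := htn β hβ
      have : ((F - α).toNat + (F - β).toNat : ℤ) = (m : ℤ) := by omega
      omega
  -- analytic part
  have hCI : canonicalIdeal K H = Submodule.span ↥(sgRing K H)
      ((fun α : ℤ => (X : PowerSeries K) ^ (F - α).toNat) '' pseudoFrobenius H) := rfl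
  have hCC : canonicalIdeal K H * canonicalIdeal K H = Submodule.span ↥(sgRing K H)
      (((fun α : ℤ => (X : PowerSeries K) ^ (F - α).toNat) '' pseudoFrobenius H) *
       ((fun α : ℤ => (X : PowerSeries K) ^ (F - α).toNat) '' pseudoFrobenius H)) := by
    rw [hCI]; exact Submodule.span_mul_span _ _ _
  have hgen : ∀ g ∈ (((fun α : ℤ => (X : PowerSeries K) ^ (F - α).toNat) '' pseudoFrobenius H) *
       ((fun α : ℤ => (X : PowerSeries K) ^ (F - α).toNat) '' pseudoFrobenius H)),
      ∀ n : ℕ, n ∉ S → coeff n g = 0 := by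
    intro g hg n hn
    rw [Set.mem_mul] at hg
    obtain ⟨a, ⟨α, hα, rfl⟩, b, ⟨β, hβ, rfl⟩, rfl⟩ := hg
    rw [← pow_add, coeff_X_pow, if_neg]
    intro h
    exact hn ⟨α, hα, β, hβ, 0, H.zero_mem, by omega⟩
  have hforward : IsFarFlungGorenstein K H → ∀ n : ℕ, n ∈ S := by
    intro hC n
    by_contra hn
    have hX : (X : PowerSeries K) ^ n ∈ canonicalIdeal K H * canonicalIdeal K H :=
      (hC : _ = ⊤).ge Submodule.mem_top
    rw [hCC] at hX
    have := coeff_eq_zero_of_mem_span hSclosed hgen hX n hn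
    rw [coeff_X_pow, if_pos rfl] at this
    exact one_ne_zero this
  have hbackward : (∀ n : ℕ, n ∈ S) → IsFarFlungGorenstein K H := by
    intro hS'
    have hDfin : {d : ℕ | ∃ α ∈ pseudoFrobenius H, ∃ β ∈ pseudoFrobenius H,
        d = (F - α).toNat + (F - β).toNat}.Finite := by
      apply Set.Finite.subset (Set.finite_Iic (2 * (F + e)).toNat)
      rintro d ⟨α, hα, β, hβ, rfl⟩
      have h1 := hPFge α hα
      have h2 := hPFge β hβ
      have h3 := hPFle α hα
      have h4 := hPFle β hβ
      simp only [Set.mem_Iic]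
      omega
    have hc : ∀ n : ℕ, ∃ d, d ∈ hDfin.toFinset ∧ d ≤ n ∧ n - d ∈ H := by
      intro n
      obtain ⟨α, hα, β, hβ, h, hh, rfl⟩ := hS' n
      refine ⟨(F - α).toNat + (F - β).toNat, ?_, by omega, ?_⟩
      · rw [Set.Finite.mem_toFinset]; exact ⟨α, hα, β, hβ, rfl⟩
      · simpa using hh
    choose c hc1 hc2 hc3 using hc
    unfold IsFarFlungGorenstein
    rw [eq_top_iff]
    intro f _
    rw [hCC]
    have hsub : (fun d => (X : PowerSeries K) ^ d) '' (hDfin.toFinset : Set ℕ) ⊆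
        (((fun α : ℤ => (X : PowerSeries K) ^ (F - α).toNat) '' pseudoFrobenius H) *
         ((fun α : ℤ => (X : PowerSeries K) ^ (F - α).toNat) '' pseudoFrobenius H)) := by
      rintro g ⟨d, hd, rfl⟩
      rw [Finset.mem_coe, Set.Finite.mem_toFinset] at hd
      obtain ⟨α, hα, β, hβ, rfl⟩ := hd
      simp only [pow_add]
      exact Set.mul_mem_mul ⟨α, hα, rfl⟩ ⟨β, hβ, rfl⟩
    exact Submodule.span_mono hsub (mem_span_monomials hDfin.toFinset c hc1 hc2 hc3 f)
  have hmain : IsFarFlungGorenstein K H ↔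
      (∀ n : ℤ, 0 ≤ n → n < (e : ℤ) →
        ∃ α ∈ pseudoFrobenius H, ∃ β ∈ pseudoFrobenius H, n = 2 * F - α - β) :=
    (⟨hforward, hbackward⟩ : IsFarFlungGorenstein K H ↔ _).trans hSA
  refine ⟨hmain, hmain.trans ?_⟩
  constructor
  · intro hA z hz1 hz2
    obtain ⟨α, hα, β, hβ, heq⟩ := hA (2 * F - z) (by omega) (by omega)
    exact ⟨α, hα, β, hβ, by omega⟩
  · intro hB n hn0 hne
    obtain ⟨α, hα, β, hβ, heq⟩ := hB (2 * F - n) (by omega) (by omega)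
    exact ⟨α, hα, β, hβ, by omega⟩
end

section
/- For H = ⟨5, 5m+1, 10m+3, 10m+4⟩ with m ≥ 1, the pseudo-Frobenius numbers are PF(H) = {10m-3, 10m-2, 10m-1}, and K[[H]] is a far-flung Gorenstein ring of type 3 that does not have minimal multiplicity. -/
set_option synthInstance.maxHeartbeats 400000

open PowerSeries

open Pointwise

theorem memH_aux_s18 (m : ℕ) (hm : 1 ≤ m) (n : ℕ) :
    n ∈ AddSubmonoid.closure ({5, 5 * m + 1, 10 * m + 3, 10 * m + 4} : Set ℕ) ↔
    (n % 5 = 0 ∨ (n % 5 = 1 ∧ 5 * m + 1 ≤ n) ∨ (n % 5 = 2 ∧ 10 * m + 2 ≤ n) ∨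
      (n % 5 = 3 ∧ 10 * m + 3 ≤ n) ∨ (n % 5 = 4 ∧ 10 * m + 4 ≤ n)) := by
  constructor
  · intro h
    induction h using AddSubmonoid.closure_induction with
    | mem x hx => rcases hx with h | h | h | h <;> simp_all <;> omega
    | zero => omega
    | add a b _ _ ha hb => omega
  · intro h
    have h5 : (5 : ℕ) ∈ AddSubmonoid.closure ({5, 5 * m + 1, 10 * m + 3, 10 * m + 4} : Set ℕ) :=
      AddSubmonoid.subset_closure (by simp)
    have hg : (5 * m + 1 : ℕ) ∈ AddSubmonoid.closure ({5, 5 * m + 1, 10 * m + 3, 10 * m + 4} : Set ℕ) :=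
      AddSubmonoid.subset_closure (by simp)
    have hmul : ∀ k : ℕ, 5 * k ∈ AddSubmonoid.closure ({5, 5 * m + 1, 10 * m + 3, 10 * m + 4} : Set ℕ) := by
      intro k
      have := AddSubmonoid.nsmul_mem _ h5 k
      simpa [nsmul_eq_mul, mul_comm] using this
    rcases h with h | ⟨h1, h2⟩ | ⟨h1, h2⟩ | ⟨h1, h2⟩ | ⟨h1, h2⟩
    · obtain ⟨k, rfl⟩ : ∃ k, n = 5 * k := ⟨n / 5, by omega⟩
      exact hmul k
    · obtain ⟨k, rfl⟩ : ∃ k, n = (5 * m + 1) + 5 * k := ⟨(n - (5 * m + 1)) / 5, by omega⟩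
      exact AddSubmonoid.add_mem _ hg (hmul k)
    · obtain ⟨k, rfl⟩ : ∃ k, n = (5 * m + 1) + ((5 * m + 1) + 5 * k) :=
        ⟨(n - (10 * m + 2)) / 5, by omega⟩
      exact AddSubmonoid.add_mem _ hg (AddSubmonoid.add_mem _ hg (hmul k))
    · obtain ⟨k, rfl⟩ : ∃ k, n = (10 * m + 3) + 5 * k := ⟨(n - (10 * m + 3)) / 5, by omega⟩
      exact AddSubmonoid.add_mem _ (AddSubmonoid.subset_closure (by simp)) (hmul k)
    · obtain ⟨k, rfl⟩ : ∃ k, n = (10 * m + 4) + 5 * k := ⟨(n - (10 * m + 4)) / 5, by omega⟩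
      exact AddSubmonoid.add_mem _ (AddSubmonoid.subset_closure (by simp)) (hmul k)

theorem memHZ_aux (m : ℕ) (hm : 1 ≤ m) (x : ℤ) :
    x ∈ (Nat.cast '' ((AddSubmonoid.closure ({5, 5 * m + 1, 10 * m + 3, 10 * m + 4} : Set ℕ) : AddSubmonoid ℕ) : Set ℕ) : Set ℤ) ↔
    (0 ≤ x ∧ (x % 5 = 0 ∨ (x % 5 = 1 ∧ 5 * (m : ℤ) + 1 ≤ x) ∨ (x % 5 = 2 ∧ 10 * (m : ℤ) + 2 ≤ x) ∨
      (x % 5 = 3 ∧ 10 * (m : ℤ) + 3 ≤ x) ∨ (x % 5 = 4 ∧ 10 * (m : ℤ) + 4 ≤ x))) := by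
  constructor
  · rintro ⟨n, hn, rfl⟩
    rw [SetLike.mem_coe, memH_aux_s18 m hm] at hn
    constructor
    · positivity
    · omega
  · rintro ⟨hx, h⟩
    refine ⟨x.toNat, ?_, by omega⟩
    rw [SetLike.mem_coe, memH_aux_s18 m hm]
    omega

noncomputable def fslice (K : Type*) [Field K] (f : PowerSeries K) (i : ℕ) : PowerSeries K :=
  PowerSeries.mk fun n => if n % 5 = 0 then PowerSeries.coeff (n + i) f else 0

theorem sum_fslice (K : Type*) [Field K] (f : PowerSeries K) :
    ∑ i ∈ Finset.range 5, fslice K f i * X ^ i = f := by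
  ext n
  rw [map_sum]
  have : ∀ i ∈ Finset.range 5,
      (PowerSeries.coeff n) (fslice K f i * X ^ i) =
      if i = n % 5 then PowerSeries.coeff n f else 0 := by
    intro i hi
    have hi5 : i < 5 := Finset.mem_range.mp hi
    rw [PowerSeries.coeff_mul_X_pow', fslice]
    by_cases hin : i ≤ n
    · rw [if_pos hin, PowerSeries.coeff_mk]
      by_cases h2 : (n - i) % 5 = 0
      · rw [if_pos h2, if_pos (by omega), show n - i + i = n by omega]
      · rw [if_neg h2, if_neg (by omega)]
    · rw [if_neg hin, if_neg (by omega)]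
  rw [Finset.sum_congr rfl this, Finset.sum_ite_eq' (Finset.range 5) (n % 5),
    if_pos (Finset.mem_range.mpr (by omega))]

/-- For `H = ⟨5, 5m+1, 10m+3, 10m+4⟩` with `m ≥ 1`, the
pseudo-Frobenius numbers are `PF(H) = {10m-3, 10m-2, 10m-1}`, and `K[[H]]` is a
far-flung Gorenstein ring of type `3` that does not have minimal multiplicity
(the minimal number of generators of `H` differs from the multiplicity `e(H) = 5`). -/
theorem farFlungGorenstein_family_5_5m1 (K : Type*) [Field K] (m : ℕ) (hm : 1 ≤ m) :
    let H : AddSubmonoid ℕ :=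
      AddSubmonoid.closure {5, 5 * m + 1, 10 * m + 3, 10 * m + 4}
    -- pseudo-Frobenius numbers
    pseudoFrobenius H = {(10 * (m : ℤ) - 3), 10 * (m : ℤ) - 2, 10 * (m : ℤ) - 1} ∧
    -- far-flung Gorenstein of type 3
    IsFarFlungGorenstein K H ∧ (pseudoFrobenius H).ncard = 3 ∧
    -- multiplicity 5, but not minimal multiplicity
    IsLeast {n : ℕ | n ∈ H ∧ n ≠ 0} 5 ∧
    sInf {k : ℕ | ∃ S : Finset ℕ, S.card = k ∧ AddSubmonoid.closure (S : Set ℕ) = H}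
      ≠ 5 := by
  intro H
  have hmemH : ∀ n : ℕ, n ∈ H ↔
      (n % 5 = 0 ∨ (n % 5 = 1 ∧ 5 * m + 1 ≤ n) ∨ (n % 5 = 2 ∧ 10 * m + 2 ≤ n) ∨
        (n % 5 = 3 ∧ 10 * m + 3 ≤ n) ∨ (n % 5 = 4 ∧ 10 * m + 4 ≤ n)) := memH_aux_s18 m hm
  have hmemZ : ∀ x : ℤ, x ∈ (Nat.cast '' (H : Set ℕ) : Set ℤ) ↔
      (0 ≤ x ∧ (x % 5 = 0 ∨ (x % 5 = 1 ∧ 5 * (m : ℤ) + 1 ≤ x) ∨ (x % 5 = 2 ∧ 10 * (m : ℤ) + 2 ≤ x) ∨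
        (x % 5 = 3 ∧ 10 * (m : ℤ) + 3 ≤ x) ∨ (x % 5 = 4 ∧ 10 * (m : ℤ) + 4 ≤ x))) :=
    memHZ_aux m hm
  have hPF : pseudoFrobenius H =
      {(10 * (m : ℤ) - 3), 10 * (m : ℤ) - 2, 10 * (m : ℤ) - 1} := by
    ext x
    simp only [pseudoFrobenius, Set.mem_setOf_eq, Set.mem_insert_iff, Set.mem_singleton_iff]
    constructor
    · rintro ⟨hx, hall⟩
      rw [hmemZ] at hx
      have h5 := hall 5 ((hmemZ 5).2 (by omega)) (by norm_num)
      have hg := hall (5 * (m : ℤ) + 1) ((hmemZ _).2 (by omega)) (by positivity)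
      rw [hmemZ] at h5 hg
      omega
    · intro hx
      constructor
      · rw [hmemZ]; omega
      · intro h hh hh0
        rw [hmemZ] at hh ⊢
        omega
  have hF : frobeniusNumber H = 10 * (m : ℤ) - 1 := by
    apply IsGreatest.csSup_eq
    constructor
    · simp only [Set.mem_setOf_eq, hmemZ]; omega
    · intro x hx
      simp only [Set.mem_setOf_eq, hmemZ] at hx
      omega
  have h5mul : ∀ k : ℕ, 5 * k ∈ H := by
    intro k
    rw [hmemH]
    omega
  refine ⟨hPF, ?_, ?_, ?_, ?_⟩
  · -- far-flung Gorenstein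
    unfold IsFarFlungGorenstein canonicalIdeal
    rw [hPF, hF]
    have himg : ((fun α : ℤ => (PowerSeries.X : PowerSeries K) ^ (10 * (m : ℤ) - 1 - α).toNat) ''
        {(10 * (m : ℤ) - 3), 10 * (m : ℤ) - 2, 10 * (m : ℤ) - 1}) =
        ({X ^ 2, X ^ 1, X ^ 0} : Set (PowerSeries K)) := by
      rw [Set.image_insert_eq, Set.image_insert_eq, Set.image_singleton,
        show (10 * (m : ℤ) - 1 - (10 * (m : ℤ) - 3)).toNat = 2 by omega,
        show (10 * (m : ℤ) - 1 - (10 * (m : ℤ) - 2)).toNat = 1 by omega,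
        show (10 * (m : ℤ) - 1 - (10 * (m : ℤ) - 1)).toNat = 0 by omega]
    rw [himg, Submodule.span_mul_span, eq_top_iff]
    intro f _
    rw [← sum_fslice K f]
    apply Submodule.sum_mem
    intro i hi
    have hfmem : fslice K f i ∈ sgRing K H := by
      show ∀ n : ℕ, n ∉ H → PowerSeries.coeff n (fslice K f i) = 0
      intro n hn
      rw [fslice, PowerSeries.coeff_mk, if_neg]
      intro h
      exact hn (by have := h5mul (n / 5); rwa [show 5 * (n / 5) = n by omega] at this)
    have hX : (X : PowerSeries K) ^ i ∈
        (({X ^ 2, X ^ 1, X ^ 0} : Set (PowerSeries K)) * ({X ^ 2, X ^ 1, X ^ 0} : Set (PowerSeries K))) := by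
      fin_cases hi
      · exact ⟨X ^ 0, by simp, X ^ 0, by simp, by ring⟩
      · exact ⟨X ^ 1, by simp, X ^ 0, by simp, by ring⟩
      · exact ⟨X ^ 2, by simp, X ^ 0, by simp, by ring⟩
      · exact ⟨X ^ 2, by simp, X ^ 1, by simp, by ring⟩
      · exact ⟨X ^ 2, by simp, X ^ 2, by simp, by ring⟩
    have := Submodule.smul_mem
      (Submodule.span ↥(sgRing K H)
        (({X ^ 2, X ^ 1, X ^ 0} : Set (PowerSeries K)) * ({X ^ 2, X ^ 1, X ^ 0} : Set (PowerSeries K))))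
      (⟨fslice K f i, hfmem⟩ : ↥(sgRing K H))
      (Submodule.subset_span hX)
    simpa [Subalgebra.smul_def] using this
  · -- ncard = 3
    rw [hPF]
    rw [Set.ncard_insert_of_notMem (by simp only [Set.mem_insert_iff, Set.mem_singleton_iff]; omega) (Set.toFinite _),
      Set.ncard_pair (by omega)]
  · -- IsLeast
    constructor
    · exact ⟨(hmemH 5).2 (by omega), by norm_num⟩
    · rintro n ⟨hn, hn0⟩
      rw [hmemH] at hn
      omega
  · -- minimal generators ≠ 5
    have h4 : 4 ∈ {k : ℕ | ∃ S : Finset ℕ, S.card = k ∧ AddSubmonoid.closure (S : Set ℕ) = H} := by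
      refine ⟨({5, 5 * m + 1, 10 * m + 3, 10 * m + 4} : Finset ℕ), ?_, ?_⟩
      · rw [Finset.card_insert_of_notMem (by simp only [Finset.mem_insert, Finset.mem_singleton]; omega),
          Finset.card_insert_of_notMem (by simp only [Finset.mem_insert, Finset.mem_singleton]; omega),
          Finset.card_insert_of_notMem (by simp only [Finset.mem_insert, Finset.mem_singleton]; omega), Finset.card_singleton]
      · congr 1
        simp
    have := Nat.sInf_le h4
    omega
end
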